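/- For n ≥ 0, the elements of ωCat(Δⁿ, PC) ∪ {constant maps Δⁿ → C₀} form the morphisms of a small category whose objects are the 0-morphisms of C: the source of a simplex x is S(x), its target is T(x), composition is the pointwise *₀ composition x*y (with the convention that composing with the appropriate constant map acts as identity), and this composition is associative with the constant maps as identities. -/
import Mathlib


/-- A strict globular ω-category: a set `A` with a family of compositions,
source and target maps `(*ₙ, sₙ, tₙ)` satisfying the 1-category axioms in each
degree, the globular axioms, the interchange law, the compatibility of
sources/targets with compositions in different degrees, and finiteness of
dimension.  `comp n x y` is only meaningful when `tgt n x = src n y`. -/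
structure OmegaCat where
  A : Type
  comp : ℕ → A → A → A
  src : ℕ → A → A
  tgt : ℕ → A → A
  src_comp : ∀ n x y, tgt n x = src n y → src n (comp n x y) = src n x
  tgt_comp : ∀ n x y, tgt n x = src n y → tgt n (comp n x y) = tgt n y
  comp_src_unit : ∀ n x, comp n (src n x) x = x
  comp_tgt_unit : ∀ n x, comp n x (tgt n x) = x
  comp_assoc : ∀ n x y z, tgt n x = src n y → tgt n y = src n z →
    comp n (comp n x y) z = comp n x (comp n y z)
  src_src_le : ∀ i j, j ≤ i → ∀ x, src i (src j x) = src j x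
  tgt_src_le : ∀ i j, j ≤ i → ∀ x, tgt i (src j x) = src j x
  src_tgt_le : ∀ i j, j ≤ i → ∀ x, src i (tgt j x) = tgt j x
  tgt_tgt_le : ∀ i j, j ≤ i → ∀ x, tgt i (tgt j x) = tgt j x
  src_src_lt : ∀ i j, i < j → ∀ x, src i (src j x) = src i x
  src_tgt_lt : ∀ i j, i < j → ∀ x, src i (tgt j x) = src i x
  tgt_src_lt : ∀ i j, i < j → ∀ x, tgt i (src j x) = tgt i x
  tgt_tgt_lt : ∀ i j, i < j → ∀ x, tgt i (tgt j x) = tgt i x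
  interchange : ∀ p q, p < q → ∀ x y z t,
    tgt p x = src p y → tgt p z = src p t → tgt q x = src q z → tgt q y = src q t →
    comp q (comp p x y) (comp p z t) = comp p (comp q x z) (comp q y t)
  src_comp_ne : ∀ i j, i ≠ j → ∀ x y, tgt j x = src j y →
    src i (comp j x y) = comp j (src i x) (src i y)
  tgt_comp_ne : ∀ i j, i ≠ j → ∀ x y, tgt j x = src j y →
    tgt i (comp j x y) = comp j (tgt i x) (tgt i y)
  finiteDim : ∀ x, ∃ n, src n x = x ∧ tgt n x = x

namespace OmegaCat

variable (C : OmegaCat)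

/-- `x` has dimension at most `n`. -/
def dimLE (n : ℕ) (x : C.A) : Prop := C.src n x = x ∧ C.tgt n x = x

/-- `x` has dimension at least 1 (strictly positive dimension). -/
def PosDim (x : C.A) : Prop := ¬ C.dimLE 0 x

/-- `x` is exactly 1-dimensional. -/
def OneDim (x : C.A) : Prop := C.dimLE 1 x ∧ ¬ C.dimLE 0 x

/-- `s₁` and `t₁` are non-contracting: for `x` of dimension ≥ 1, `s₁ x` and
`t₁ x` are 1-dimensional. -/
def NonContracting : Prop :=
  ∀ x : C.A, C.PosDim x → C.OneDim (C.src 1 x) ∧ C.OneDim (C.tgt 1 x)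

end OmegaCat

/-- A face of the `n`-simplex: a nonempty strictly increasing sequence in
`{0, …, n}`, encoded as a nonempty subset of `Fin (n+1)`. -/
def SimplexFace (n : ℕ) : Type := {s : Finset (Fin (n+1)) // s.Nonempty}

/-- The face obtained from `σ` by deleting the element in position `i`
(positions in the increasing enumeration of `σ`, counted from 0). -/
def delPos {n : ℕ} (σ : Finset (Fin (n+1))) (i : ℕ) : Finset (Fin (n+1)) :=
  ((σ.sort (· ≤ ·)).eraseIdx i).toFinset

/-- `Gen C S x`: `x` is an iterated composite of elements of `S` in the
ω-category `C`. -/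
inductive Gen (C : OmegaCat) (S : Set C.A) : C.A → Prop
  | of {x : C.A} : x ∈ S → Gen C S x
  | cmp {p : ℕ} {x y : C.A} : Gen C S x → Gen C S y → C.tgt p x = C.src p y →
      Gen C S (C.comp p x y)

/-- A presentation of Street's free ω-category `Δⁿ` generated by the faces of
the `n`-simplex: an ω-category `D` with an injection `R` of the faces, in which
every element is a composite of faces, `R σ` has the dimension of `σ`, and the
`(p-1)`-source (resp. target) of a `p`-dimensional face `R σ` is a composite of
the subfaces of the faces obtained from `σ` by removing one element in odd
(resp. even) position. -/
structure SimplexStruct (n : ℕ) where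
  D : OmegaCat
  R : SimplexFace n → D.A
  inj : Function.Injective R
  dim_le : ∀ σ : SimplexFace n, D.dimLE (σ.1.card - 1) (R σ)
  dim_exact : ∀ σ : SimplexFace n, 2 ≤ σ.1.card → ¬ D.dimLE (σ.1.card - 2) (R σ)
  src_boundary : ∀ σ : SimplexFace n, 2 ≤ σ.1.card →
    Gen D {y | ∃ τ : SimplexFace n,
        (∃ i, i < σ.1.card ∧ Odd i ∧ τ.1 ⊆ delPos σ.1 i) ∧ y = R τ}
      (D.src (σ.1.card - 2) (R σ))
  tgt_boundary : ∀ σ : SimplexFace n, 2 ≤ σ.1.card →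
    Gen D {y | ∃ τ : SimplexFace n,
        (∃ i, i < σ.1.card ∧ Even i ∧ τ.1 ⊆ delPos σ.1 i) ∧ y = R τ}
      (D.tgt (σ.1.card - 2) (R σ))
  generates : ∀ x : D.A, Gen D (Set.range R) x

/-- An ω-functor from `D` to the path ω-category `PC` of `C`: a map landing in
the morphisms of strictly positive dimension, sending the `m`-source,
`m`-target and `*ₘ`-composition of `D` to the `(m+1)`-source, `(m+1)`-target
and `*ₘ₊₁`-composition of `C`. -/
structure ToPathFunctor (D C : OmegaCat) where
  f : D.A → C.A
  pos : ∀ d, C.PosDim (f d)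
  map_src : ∀ m d, f (D.src m d) = C.src (m+1) (f d)
  map_tgt : ∀ m d, f (D.tgt m d) = C.tgt (m+1) (f d)
  map_comp : ∀ m a b, D.tgt m a = D.src m b →
    f (D.comp m a b) = C.comp (m+1) (f a) (f b)

/-- The vertex `(0)` of the `n`-simplex. -/
def vertex0 (n : ℕ) : SimplexFace n := ⟨{0}, Finset.singleton_nonempty 0⟩

/-- Morphisms of the small category `N^{gl}ₙ(C)`: globular `n`-simplices
(ω-functors `Δⁿ → PC`) together with the constant maps `Δⁿ → C₀`
(identified with their value, a `0`-morphism of `C`). -/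
def Mor {n : ℕ} (S : SimplexStruct n) (C : OmegaCat) : Type :=
  ToPathFunctor S.D C ⊕ {a : C.A // C.dimLE 0 a}

/-- The source `0`-morphism `S(-)`. -/
def Sval {n : ℕ} (S : SimplexStruct n) (C : OmegaCat) : Mor S C → C.A
  | .inl F => C.src 0 (F.f (S.R (vertex0 n)))
  | .inr a => a.1

/-- The target `0`-morphism `T(-)`. -/
def Tval {n : ℕ} (S : SimplexStruct n) (C : OmegaCat) : Mor S C → C.A
  | .inl F => C.tgt 0 (F.f (S.R (vertex0 n)))
  | .inr a => a.1

/-- The pointwise `*₀`-composite of two globular simplices. -/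
def ptwise {n : ℕ} (S : SimplexStruct n) (C : OmegaCat)
    (F G : ToPathFunctor S.D C) : S.D.A → C.A :=
  fun d => C.comp 0 (F.f d) (G.f d)

/-- `star` is the composition described in the paper: for composable
simplices it is the pointwise `*₀`-composition if its image lies in `PC`, and
the constant map `S(x)` otherwise; composing with the appropriate constant map
acts as the identity. -/
def Spec {n : ℕ} (S : SimplexStruct n) (C : OmegaCat)
    (star : Mor S C → Mor S C → Mor S C) : Prop :=
  (∀ F G : ToPathFunctor S.D C, Tval S C (.inl F) = Sval S C (.inl G) →
    ((∀ d, C.PosDim (ptwise S C F G d)) →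
        ∃ Z : ToPathFunctor S.D C, Z.f = ptwise S C F G ∧
          star (.inl F) (.inl G) = .inl Z) ∧
    ((∃ d, ¬ C.PosDim (ptwise S C F G d)) →
        ∀ a : {a : C.A // C.dimLE 0 a}, a.1 = Sval S C (.inl F) →
          star (.inl F) (.inl G) = .inr a)) ∧
  (∀ (a : {a : C.A // C.dimLE 0 a}) (m : Mor S C),
    Sval S C m = a.1 → star (.inr a) m = m) ∧
  (∀ (a : {a : C.A // C.dimLE 0 a}) (m : Mor S C),
    Tval S C m = a.1 → star m (.inr a) = m)

section BasicAux

variable (C : OmegaCat)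

lemma dim0_srck {x : C.A} (h : C.dimLE 0 x) (k : ℕ) : C.src k x = x := by
  conv_lhs => rw [← h.1]
  rw [C.src_src_le k 0 (Nat.zero_le k), h.1]

lemma dim0_tgtk {x : C.A} (h : C.dimLE 0 x) (k : ℕ) : C.tgt k x = x := by
  conv_lhs => rw [← h.1]
  rw [C.tgt_src_le k 0 (Nat.zero_le k), h.1]

lemma dim0_src0 (x : C.A) : C.dimLE 0 (C.src 0 x) :=
  ⟨C.src_src_le 0 0 le_rfl x, C.tgt_src_le 0 0 le_rfl x⟩

lemma dim0_tgt0 (x : C.A) : C.dimLE 0 (C.tgt 0 x) :=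
  ⟨C.src_tgt_le 0 0 le_rfl x, C.tgt_tgt_le 0 0 le_rfl x⟩

lemma comp_self_dim0 {c : C.A} (h : C.dimLE 0 c) (k : ℕ) : C.comp k c c = c := by
  nth_rewrite 2 [← dim0_tgtk C h k]
  exact C.comp_tgt_unit k c

lemma src0_eq_of_glue (k : ℕ) {x y : C.A} (h : C.tgt (k+1) x = C.src (k+1) y) :
    C.src 0 x = C.src 0 y := by
  rw [← C.src_tgt_lt 0 (k+1) (Nat.succ_pos k) x, h, C.src_src_lt 0 (k+1) (Nat.succ_pos k) y]

lemma tgt0_eq_of_glue (k : ℕ) {x y : C.A} (h : C.tgt (k+1) x = C.src (k+1) y) :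
    C.tgt 0 x = C.tgt 0 y := by
  rw [← C.tgt_tgt_lt 0 (k+1) (Nat.succ_pos k) x, h, C.tgt_src_lt 0 (k+1) (Nat.succ_pos k) y]

lemma src0_comp_succ (k : ℕ) {x y : C.A} (h : C.tgt (k+1) x = C.src (k+1) y) :
    C.src 0 (C.comp (k+1) x y) = C.src 0 x := by
  rw [C.src_comp_ne 0 (k+1) (by omega) x y h, ← src0_eq_of_glue C k h,
    comp_self_dim0 C (dim0_src0 C x) (k+1)]

lemma tgt0_comp_succ (k : ℕ) {x y : C.A} (h : C.tgt (k+1) x = C.src (k+1) y) :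
    C.tgt 0 (C.comp (k+1) x y) = C.tgt 0 x := by
  rw [C.tgt_comp_ne 0 (k+1) (by omega) x y h, ← tgt0_eq_of_glue C k h,
    comp_self_dim0 C (dim0_tgt0 C x) (k+1)]

lemma pos_src_succ (hC : C.NonContracting) {z : C.A} (hz : C.PosDim z) (m : ℕ) :
    C.PosDim (C.src (m+1) z) := by
  intro h0
  apply ((hC z hz).1).2
  rcases Nat.lt_or_ge 1 (m+1) with hlt | hle
  · rw [← C.src_src_lt 1 (m+1) hlt z, dim0_srck C h0 1]
    exact h0
  · have hm : m = 0 := by omega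
    subst hm; exact h0

lemma pos_tgt_succ (hC : C.NonContracting) {z : C.A} (hz : C.PosDim z) (m : ℕ) :
    C.PosDim (C.tgt (m+1) z) := by
  intro h0
  apply ((hC z hz).2).2
  rcases Nat.lt_or_ge 1 (m+1) with hlt | hle
  · rw [← C.tgt_tgt_lt 1 (m+1) hlt z, dim0_tgtk C h0 1]
    exact h0
  · have hm : m = 0 := by omega
    subst hm; exact h0

lemma dim0_of_src_succ (hC : C.NonContracting) (m : ℕ) {z : C.A}
    (h : C.dimLE 0 (C.src (m+1) z)) : C.dimLE 0 z := by
  by_contra hz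
  exact pos_src_succ C hC hz m h

lemma dim0_of_tgt_succ (hC : C.NonContracting) (m : ℕ) {z : C.A}
    (h : C.dimLE 0 (C.tgt (m+1) z)) : C.dimLE 0 z := by
  by_contra hz
  exact pos_tgt_succ C hC hz m h

end BasicAux

section GenAux

lemma gen_iff {D : OmegaCat} {Q : D.A → Prop}
    (hcomp : ∀ p a b, D.tgt p a = D.src p b → (Q (D.comp p a b) ↔ (Q a ∧ Q b)))
    (c : Prop) {T : Set D.A} (hT : ∀ y ∈ T, (Q y ↔ c)) :
    ∀ {x}, Gen D T x → (Q x ↔ c) := by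
  intro x hx
  induction hx with
  | of h => exact hT _ h
  | cmp ha hb hside iha ihb => rw [hcomp _ _ _ hside, iha, ihb, and_self_iff]

lemma delPos_card_lt {n : ℕ} (σ : Finset (Fin (n+1))) {j : ℕ} (hj : j < σ.card) :
    (delPos σ j).card < σ.card := by
  unfold delPos
  have h1 : ((σ.sort (· ≤ ·)).eraseIdx j).toFinset.card ≤
      ((σ.sort (· ≤ ·)).eraseIdx j).length := List.toFinset_card_le _
  have h2 : j < (σ.sort (· ≤ ·)).length := by rwa [Finset.length_sort]
  have h3 := List.length_eraseIdx_add_one h2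
  have h4 : (σ.sort (· ≤ ·)).length = σ.card := Finset.length_sort _
  omega

lemma sort_pair {n : ℕ} {i : Fin (n+1)} (hi : i ≠ 0) :
    ({0, i} : Finset (Fin (n+1))).sort (· ≤ ·) = [0, i] := by
  rw [Finset.sort_insert]
  · rw [Finset.sort_singleton]
  · intro b hb
    exact Fin.zero_le b
  · simp [Ne.symm hi]

lemma face_iff {n : ℕ} (S : SimplexStruct n) (Q : S.D.A → Prop)
    (hsrc : ∀ m d, Q (S.D.src m d) ↔ Q d)
    (htgt : ∀ m d, Q (S.D.tgt m d) ↔ Q d)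
    (hcomp : ∀ p a b, S.D.tgt p a = S.D.src p b → (Q (S.D.comp p a b) ↔ (Q a ∧ Q b))) :
    ∀ σ : SimplexFace n, (Q (S.R σ) ↔ Q (S.R (vertex0 n))) := by
  have key : ∀ k, ∀ σ : SimplexFace n, σ.1.card ≤ k → (Q (S.R σ) ↔ Q (S.R (vertex0 n))) := by
    intro k
    induction k with
    | zero =>
      intro σ h
      exact absurd (Finset.card_pos.mpr σ.2) (by omega)
    | succ k ih =>
      intro σ hcard
      rcases Nat.lt_or_ge σ.1.card 2 with h2 | h2
      · -- vertex case
        have hc1 : σ.1.card = 1 := by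
          have := Finset.card_pos.mpr σ.2; omega
        obtain ⟨i, hi⟩ := Finset.card_eq_one.mp hc1
        by_cases hi0 : i = 0
        · have : σ = vertex0 n := Subtype.ext (by rw [hi, hi0]; rfl)
          rw [this]
        · set ε : SimplexFace n := ⟨{0, i}, Finset.insert_nonempty 0 {i}⟩ with hε
          have hεcard : ε.1.card = 2 := by
            rw [hε]
            rw [Finset.card_insert_of_notMem (by simp [Ne.symm hi0]), Finset.card_singleton]
          have h22 : 2 ≤ ε.1.card := le_of_eq hεcard.symm
          have hsort : ε.1.sort (· ≤ ·) = [0, i] := sort_pair hi0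
          have hQs : Q (S.D.src (ε.1.card - 2) (S.R ε)) ↔ Q (S.R (vertex0 n)) := by
            refine gen_iff hcomp _ ?_ (S.src_boundary ε h22)
            rintro y ⟨τ, ⟨j, hj, hodd, hτ⟩, rfl⟩
            rw [Nat.odd_iff] at hodd
            have hj1 : j = 1 := by rw [hεcard] at hj; omega
            subst hj1
            have hdel : delPos ε.1 1 = {0} := by
              unfold delPos; rw [hsort]; rfl
            rw [hdel] at hτ
            have hτ0 : τ = vertex0 n := by
              apply Subtype.ext
              rcases Finset.subset_singleton_iff.mp hτ with h | h
              · exact absurd h (Finset.nonempty_iff_ne_empty.mp τ.2)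
              · exact h
            rw [hτ0]
          have hQt : Q (S.D.tgt (ε.1.card - 2) (S.R ε)) ↔ Q (S.R σ) := by
            refine gen_iff hcomp _ ?_ (S.tgt_boundary ε h22)
            rintro y ⟨τ, ⟨j, hj, heven, hτ⟩, rfl⟩
            rw [Nat.even_iff] at heven
            have hj0 : j = 0 := by omega
            subst hj0
            have hdel : delPos ε.1 0 = {i} := by
              unfold delPos; rw [hsort]; rfl
            rw [hdel] at hτ
            have hτi : τ = σ := by
              apply Subtype.ext
              rcases Finset.subset_singleton_iff.mp hτ with h | h
              · exact absurd h (Finset.nonempty_iff_ne_empty.mp τ.2)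
              · rw [h, hi]
            rw [hτi]
          rw [hsrc] at hQs
          rw [htgt] at hQt
          exact hQt.symm.trans hQs
      · have hQ : Q (S.D.src (σ.1.card - 2) (S.R σ)) ↔ Q (S.R (vertex0 n)) := by
          refine gen_iff hcomp _ ?_ (S.src_boundary σ h2)
          rintro y ⟨τ, ⟨j, hj, _, hτ⟩, rfl⟩
          refine ih τ ?_
          have hlt := delPos_card_lt σ.1 hj
          have hle := Finset.card_le_card hτ
          omega
        rw [hsrc] at hQ
        exact hQ
  intro σ; exact key σ.1.card σ le_rfl

end GenAux

section FunctorAux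

variable {n : ℕ} {S : SimplexStruct n} {C : OmegaCat}

lemma tpf_ext {F G : ToPathFunctor S.D C} (h : F.f = G.f) : F = G := by
  cases F; cases G; cases h; rfl

lemma tpf_side (F : ToPathFunctor S.D C) {p : ℕ} {a b : S.D.A}
    (h : S.D.tgt p a = S.D.src p b) :
    C.tgt (p+1) (F.f a) = C.src (p+1) (F.f b) := by
  rw [← F.map_tgt, ← F.map_src, h]

lemma const_src0 (F : ToPathFunctor S.D C) (d : S.D.A) :
    C.src 0 (F.f d) = C.src 0 (F.f (S.R (vertex0 n))) := by
  set c := C.src 0 (F.f (S.R (vertex0 n))) with hc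
  set Q : S.D.A → Prop := fun d => C.src 0 (F.f d) = c with hQ
  have hsrc : ∀ m d, Q (S.D.src m d) ↔ Q d := by
    intro m d
    simp only [hQ, F.map_src, C.src_src_lt 0 (m+1) (Nat.succ_pos m)]
  have htgt : ∀ m d, Q (S.D.tgt m d) ↔ Q d := by
    intro m d
    simp only [hQ, F.map_tgt, C.src_tgt_lt 0 (m+1) (Nat.succ_pos m)]
  have hcomp : ∀ p a b, S.D.tgt p a = S.D.src p b → (Q (S.D.comp p a b) ↔ (Q a ∧ Q b)) := by
    intro p a b hside
    have hside' := tpf_side F hside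
    have hglue := src0_eq_of_glue C p hside'
    simp only [hQ, F.map_comp p a b hside, src0_comp_succ C p hside']
    constructor
    · intro h; exact ⟨h, hglue ▸ h⟩
    · intro h; exact h.1
  have := gen_iff hcomp (Q (S.R (vertex0 n)))
    (T := Set.range S.R) (fun y ⟨σ, hσ⟩ => hσ ▸ face_iff S Q hsrc htgt hcomp σ)
    (S.generates d)
  exact this.mpr hc.symm

lemma const_tgt0 (F : ToPathFunctor S.D C) (d : S.D.A) :
    C.tgt 0 (F.f d) = C.tgt 0 (F.f (S.R (vertex0 n))) := by
  set c := C.tgt 0 (F.f (S.R (vertex0 n))) with hc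
  set Q : S.D.A → Prop := fun d => C.tgt 0 (F.f d) = c with hQ
  have hsrc : ∀ m d, Q (S.D.src m d) ↔ Q d := by
    intro m d
    simp only [hQ, F.map_src, C.tgt_src_lt 0 (m+1) (Nat.succ_pos m)]
  have htgt : ∀ m d, Q (S.D.tgt m d) ↔ Q d := by
    intro m d
    simp only [hQ, F.map_tgt, C.tgt_tgt_lt 0 (m+1) (Nat.succ_pos m)]
  have hcomp : ∀ p a b, S.D.tgt p a = S.D.src p b → (Q (S.D.comp p a b) ↔ (Q a ∧ Q b)) := by
    intro p a b hside
    have hside' := tpf_side F hside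
    have hglue := tgt0_eq_of_glue C p hside'
    simp only [hQ, F.map_comp p a b hside, tgt0_comp_succ C p hside']
    constructor
    · intro h; exact ⟨h, hglue ▸ h⟩
    · intro h; exact h.1
  have := gen_iff hcomp (Q (S.R (vertex0 n)))
    (T := Set.range S.R) (fun y ⟨σ, hσ⟩ => hσ ▸ face_iff S Q hsrc htgt hcomp σ)
    (S.generates d)
  exact this.mpr hc.symm

lemma side_all {F G : ToPathFunctor S.D C}
    (h : Tval S C (.inl F) = Sval S C (.inl G)) (d : S.D.A) :
    C.tgt 0 (F.f d) = C.src 0 (G.f d) := by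
  rw [const_tgt0 F d, const_src0 G d]
  exact h

end FunctorAux

section DegenAux

variable {n : ℕ} {S : SimplexStruct n} {C : OmegaCat}

/-- if the pointwise composite is degenerate somewhere, it is degenerate everywhere. -/
lemma degen_all (hC : C.NonContracting) (F G : ToPathFunctor S.D C)
    (hside : ∀ d, C.tgt 0 (F.f d) = C.src 0 (G.f d))
    (hdeg : ∃ d, ¬ C.PosDim (ptwise S C F G d)) :
    ∀ d, C.dimLE 0 (ptwise S C F G d) := by
  set Q : S.D.A → Prop := fun d => C.dimLE 0 (ptwise S C F G d) with hQ
  have hsrc : ∀ m d, Q (S.D.src m d) ↔ Q d := by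
    intro m d
    have hval : ptwise S C F G (S.D.src m d) = C.src (m+1) (ptwise S C F G d) := by
      simp only [ptwise, F.map_src, G.map_src]
      exact (C.src_comp_ne (m+1) 0 (by omega) _ _ (hside d)).symm
    simp only [hQ, hval]
    constructor
    · exact dim0_of_src_succ C hC m
    · intro h
      rw [dim0_srck C h (m+1)]; exact h
  have htgt : ∀ m d, Q (S.D.tgt m d) ↔ Q d := by
    intro m d
    have hval : ptwise S C F G (S.D.tgt m d) = C.tgt (m+1) (ptwise S C F G d) := by
      simp only [ptwise, F.map_tgt, G.map_tgt]
      exact (C.tgt_comp_ne (m+1) 0 (by omega) _ _ (hside d)).symm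
    simp only [hQ, hval]
    constructor
    · exact dim0_of_tgt_succ C hC m
    · intro h
      rw [dim0_tgtk C h (m+1)]; exact h
  have hcomp : ∀ p a b, S.D.tgt p a = S.D.src p b → (Q (S.D.comp p a b) ↔ (Q a ∧ Q b)) := by
    intro p a b hDside
    have hFside := tpf_side F hDside
    have hGside := tpf_side G hDside
    have hval : ptwise S C F G (S.D.comp p a b) =
        C.comp (p+1) (ptwise S C F G a) (ptwise S C F G b) := by
      simp only [ptwise, F.map_comp p a b hDside, G.map_comp p a b hDside]
      exact C.interchange 0 (p+1) (Nat.succ_pos p) _ _ _ _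
        (hside a) (hside b) hFside hGside |>.symm
    have hglue : C.tgt (p+1) (ptwise S C F G a) = C.src (p+1) (ptwise S C F G b) := by
      simp only [ptwise]
      rw [C.tgt_comp_ne (p+1) 0 (by omega) _ _ (hside a),
        C.src_comp_ne (p+1) 0 (by omega) _ _ (hside b), hFside, hGside]
    simp only [hQ, hval]
    constructor
    · intro h
      constructor
      · apply dim0_of_src_succ C hC p
        have := C.src_comp (p+1) _ _ hglue
        rw [dim0_srck C h (p+1)] at this
        rw [← this]; exact h
      · apply dim0_of_tgt_succ C hC p
        have := C.tgt_comp (p+1) _ _ hglue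
        rw [dim0_tgtk C h (p+1)] at this
        rw [← this]; exact h
    · rintro ⟨ha, hb⟩
      have heq : ptwise S C F G a = ptwise S C F G b := by
        rw [← dim0_tgtk C ha (p+1), hglue, dim0_srck C hb (p+1)]
      rw [heq, comp_self_dim0 C hb (p+1)]
      exact hb
  obtain ⟨d0, hd0⟩ := hdeg
  have hQd0 : Q d0 := not_not.mp hd0
  have hface := face_iff S Q hsrc htgt hcomp
  have h0 : Q (S.R (vertex0 n)) := by
    have := gen_iff hcomp (Q (S.R (vertex0 n)))
      (T := Set.range S.R) (fun y ⟨σ, hσ⟩ => hσ ▸ hface σ) (S.generates d0)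
    exact this.mp hQd0
  intro d
  have := gen_iff hcomp (Q (S.R (vertex0 n)))
    (T := Set.range S.R) (fun y ⟨σ, hσ⟩ => hσ ▸ hface σ) (S.generates d)
  exact this.mpr h0

/-- value of a degenerate composite. -/
lemma degen_val_src (F G : ToPathFunctor S.D C)
    (hside : ∀ d, C.tgt 0 (F.f d) = C.src 0 (G.f d))
    {d : S.D.A} (h : C.dimLE 0 (ptwise S C F G d)) :
    ptwise S C F G d = C.src 0 (F.f d) := by
  rw [← C.src_comp 0 _ _ (hside d)]
  exact h.1.symm

lemma degen_val_tgt (F G : ToPathFunctor S.D C)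
    (hside : ∀ d, C.tgt 0 (F.f d) = C.src 0 (G.f d))
    {d : S.D.A} (h : C.dimLE 0 (ptwise S C F G d)) :
    ptwise S C F G d = C.tgt 0 (G.f d) := by
  rw [← C.tgt_comp 0 _ _ (hside d)]
  exact h.2.symm

end DegenAux

lemma part1 {n : ℕ} (S : SimplexStruct n) (C : OmegaCat) (hC : C.NonContracting)
    (star : Mor S C → Mor S C → Mor S C) (hstar : Spec S C star) :
    ∀ f g : Mor S C, Tval S C f = Sval S C g →
      Sval S C (star f g) = Sval S C f ∧ Tval S C (star f g) = Tval S C g := by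
  intro f g h
  rcases f with F | a
  · rcases g with G | a
    · by_cases hp : ∀ d, C.PosDim (ptwise S C F G d)
      · obtain ⟨Z, hZ, hst⟩ := (hstar.1 F G h).1 hp
        rw [hst]
        have hv : C.tgt 0 (F.f (S.R (vertex0 n))) = C.src 0 (G.f (S.R (vertex0 n))) := h
        constructor
        · show C.src 0 (Z.f _) = C.src 0 (F.f _)
          rw [hZ]; exact C.src_comp 0 _ _ hv
        · show C.tgt 0 (Z.f _) = C.tgt 0 (G.f _)
          rw [hZ]; exact C.tgt_comp 0 _ _ hv
      · push_neg at hp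
        have hside := side_all (F := F) (G := G) h
        have hall := degen_all hC F G hside hp
        have hst := (hstar.1 F G h).2 hp ⟨Sval S C (.inl F), dim0_src0 C _⟩ rfl
        rw [hst]
        refine ⟨rfl, ?_⟩
        show Sval S C (.inl F) = C.tgt 0 (G.f (S.R (vertex0 n)))
        have hv := hall (S.R (vertex0 n))
        have h1 := degen_val_src F G hside hv
        have h2 := degen_val_tgt F G hside hv
        exact h1.symm.trans h2
    · rw [hstar.2.2 a (.inl F) h]
      exact ⟨rfl, h⟩
  · rw [hstar.2.1 a g h.symm]
    exact ⟨h.symm, rfl⟩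

/-- For `n ≥ 0`, the globular `n`-simplices of `C` together with the constant
maps `Δⁿ → C₀` are the morphisms of a small category whose objects are the
`0`-morphisms of `C`: sources and targets of composites behave correctly,
composition (pointwise `*₀`, with the stated conventions) is associative, and
the constant maps are the identities. -/
theorem stmt11 (n : ℕ) (S : SimplexStruct n) (C : OmegaCat)
    (hC : C.NonContracting)
    (star : Mor S C → Mor S C → Mor S C) (hstar : Spec S C star) :
    (∀ f g : Mor S C, Tval S C f = Sval S C g →
        Sval S C (star f g) = Sval S C f ∧ Tval S C (star f g) = Tval S C g) ∧
    (∀ f g h : Mor S C, Tval S C f = Sval S C g → Tval S C g = Sval S C h →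
        star (star f g) h = star f (star g h)) ∧
    (∀ a : {a : C.A // C.dimLE 0 a},
        Sval S C (.inr a) = a.1 ∧ Tval S C (.inr a) = a.1) ∧
    (∀ (f : Mor S C) (a : {a : C.A // C.dimLE 0 a}),
        a.1 = Sval S C f → star (.inr a) f = f) ∧
    (∀ (f : Mor S C) (a : {a : C.A // C.dimLE 0 a}),
        a.1 = Tval S C f → star f (.inr a) = f) := by
  refine ⟨part1 S C hC star hstar, ?_, fun a => ⟨rfl, rfl⟩,
    fun f a ha => hstar.2.1 a f ha.symm, fun f a ha => hstar.2.2 a f ha.symm⟩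
  intro f g h hfg hgh
  rcases f with F | a
  · rcases g with G | b
    · rcases h with H | c
      · -- main case: all three are simplices
        have hFG := side_all (F := F) (G := G) hfg
        have hGH := side_all (F := G) (G := H) hgh
        by_cases pFG : ∀ d, C.PosDim (ptwise S C F G d)
        · obtain ⟨Z1, hZ1, e1⟩ := (hstar.1 F G hfg).1 pFG
          have hTZ1 : Tval S C (.inl Z1) = Tval S C (.inl G) := by
            show C.tgt 0 (Z1.f _) = _
            rw [hZ1]
            exact C.tgt_comp 0 _ _ (hFG _)
          have hZ1H : Tval S C (.inl Z1) = Sval S C (.inl H) := hTZ1.trans hgh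
          have hSZ1 : Sval S C (.inl Z1) = Sval S C (.inl F) := by
            show C.src 0 (Z1.f _) = _
            rw [hZ1]; exact C.src_comp 0 _ _ (hFG _)
          rw [e1]
          by_cases pGH : ∀ d, C.PosDim (ptwise S C G H d)
          · obtain ⟨Z2, hZ2, e2⟩ := (hstar.1 G H hgh).1 pGH
            have hSZ2 : Sval S C (.inl Z2) = Sval S C (.inl G) := by
              show C.src 0 (Z2.f _) = _
              rw [hZ2]; exact C.src_comp 0 _ _ (hGH _)
            have hFZ2 : Tval S C (.inl F) = Sval S C (.inl Z2) := hfg.trans hSZ2.symm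
            have hptw : ptwise S C Z1 H = ptwise S C F Z2 := by
              funext d
              simp only [ptwise, hZ1, hZ2]
              exact C.comp_assoc 0 _ _ _ (hFG d) (hGH d)
            rw [e2]
            by_cases pT : ∀ d, C.PosDim (ptwise S C Z1 H d)
            · obtain ⟨W1, hW1, eL⟩ := (hstar.1 Z1 H hZ1H).1 pT
              obtain ⟨W2, hW2, eR⟩ := (hstar.1 F Z2 hFZ2).1 (by rw [← hptw]; exact pT)
              rw [eL, eR]
              exact congrArg Sum.inl (tpf_ext (hW1.trans (hptw.trans hW2.symm)))
            · push_neg at pT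
              have eL := (hstar.1 Z1 H hZ1H).2 pT
                ⟨Sval S C (.inl F), dim0_src0 C _⟩ hSZ1.symm
              have pT' : ∃ d, ¬ C.PosDim (ptwise S C F Z2 d) := by
                rw [← hptw]; exact pT
              have eR := (hstar.1 F Z2 hFZ2).2 pT'
                ⟨Sval S C (.inl F), dim0_src0 C _⟩ rfl
              rw [eL, eR]
          · -- FG positive, GH degenerate
            push_neg at pGH
            have hallGH := degen_all hC G H hGH pGH
            have eGH := (hstar.1 G H hgh).2 pGH ⟨Sval S C (.inl G), dim0_src0 C _⟩ rfl
            rw [eGH, hstar.2.2 _ (Sum.inl F) hfg]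
            have hkey : ptwise S C Z1 H = F.f := by
              funext d
              simp only [ptwise, hZ1]
              rw [C.comp_assoc 0 _ _ _ (hFG d) (hGH d)]
              have hz : C.comp 0 (G.f d) (H.f d) = C.tgt 0 (F.f d) := by
                have hv := degen_val_src G H hGH (hallGH d)
                simp only [ptwise] at hv
                rw [hv, ← hFG d]
              rw [hz, C.comp_tgt_unit 0 (F.f d)]
            obtain ⟨W, hW, eL⟩ := (hstar.1 Z1 H hZ1H).1
              (by intro d; rw [show ptwise S C Z1 H d = F.f d from congrFun hkey d]
                  exact F.pos d)
            rw [eL]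
            exact congrArg Sum.inl (tpf_ext (hW.trans hkey))
        · -- FG degenerate
          push_neg at pFG
          have hallFG := degen_all hC F G hFG pFG
          have eFG := (hstar.1 F G hfg).2 pFG ⟨Sval S C (.inl F), dim0_src0 C _⟩ rfl
          rw [eFG]
          have hSF : Sval S C (.inl F) = C.tgt 0 (G.f (S.R (vertex0 n))) := by
            have h1 := degen_val_src F G hFG (hallFG (S.R (vertex0 n)))
            have h2 := degen_val_tgt F G hFG (hallFG (S.R (vertex0 n)))
            exact h1.symm.trans h2
          have hSH : Sval S C (.inl H) = Sval S C (.inl F) := hgh.symm.trans hSF.symm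
          rw [hstar.2.1 _ (Sum.inl H) hSH]
          by_cases pGH : ∀ d, C.PosDim (ptwise S C G H d)
          · obtain ⟨Z2, hZ2, e2⟩ := (hstar.1 G H hgh).1 pGH
            have hSZ2 : Sval S C (.inl Z2) = Sval S C (.inl G) := by
              show C.src 0 (Z2.f _) = _
              rw [hZ2]; exact C.src_comp 0 _ _ (hGH _)
            have hFZ2 : Tval S C (.inl F) = Sval S C (.inl Z2) := hfg.trans hSZ2.symm
            rw [e2]
            have hkey : ptwise S C F Z2 = H.f := by
              funext d
              simp only [ptwise, hZ2]
              rw [← C.comp_assoc 0 _ _ _ (hFG d) (hGH d)]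
              have hz : C.comp 0 (F.f d) (G.f d) = C.src 0 (H.f d) := by
                have hv := degen_val_tgt F G hFG (hallFG d)
                simp only [ptwise] at hv
                rw [hv, hGH d]
              rw [hz, C.comp_src_unit 0 (H.f d)]
            obtain ⟨W, hW, eR⟩ := (hstar.1 F Z2 hFZ2).1
              (by intro d; rw [show ptwise S C F Z2 d = H.f d from congrFun hkey d]
                  exact H.pos d)
            rw [eR]
            exact congrArg Sum.inl (tpf_ext (hW.trans hkey)).symm
          · -- both degenerate: F = H
            push_neg at pGH
            have hallGH := degen_all hC G H hGH pGH
            have eGH := (hstar.1 G H hgh).2 pGH ⟨Sval S C (.inl G), dim0_src0 C _⟩ rfl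
            rw [eGH, hstar.2.2 _ (Sum.inl F) hfg]
            have hFH : F.f = H.f := by
              funext d
              calc F.f d = C.comp 0 (F.f d) (C.tgt 0 (F.f d)) :=
                    (C.comp_tgt_unit 0 _).symm
                _ = C.comp 0 (F.f d) (C.comp 0 (G.f d) (H.f d)) := by
                    have hv := degen_val_src G H hGH (hallGH d)
                    simp only [ptwise] at hv
                    rw [hFG d, ← hv]
                _ = C.comp 0 (C.comp 0 (F.f d) (G.f d)) (H.f d) :=
                    (C.comp_assoc 0 _ _ _ (hFG d) (hGH d)).symm
                _ = C.comp 0 (C.src 0 (H.f d)) (H.f d) := by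
                    have hv := degen_val_tgt F G hFG (hallFG d)
                    simp only [ptwise] at hv
                    rw [hv, hGH d]
                _ = H.f d := C.comp_src_unit 0 _
            exact congrArg Sum.inl (tpf_ext hFH).symm
      · -- h = inr c
        have e1 : star (.inl G) (.inr c) = .inl G := hstar.2.2 c _ hgh
        have e2 : star (star (.inl F) (.inl G)) (.inr c) = star (.inl F) (.inl G) :=
          hstar.2.2 c _ ((part1 S C hC star hstar _ _ hfg).2.trans hgh)
        rw [e1, e2]
    · -- g = inr b
      rw [hstar.2.2 b (.inl F) hfg, hstar.2.1 b h hgh.symm]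
  · -- f = inr a
    rw [hstar.2.1 a g hfg.symm,
      hstar.2.1 a (star g h) ((part1 S C hC star hstar g h hgh).1.trans hfg.symm)]
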